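/- arXiv:2307.09663 — 5 statements merged into one kernel-verified Lean document; each statement's English description precedes it below -/
import Mathlib

section
/- Let G be a simple graph on n vertices that is (s,t) regular with respect to a clique partition F of size k, i.e., every vertex lies in exactly t cliques of F and every clique of F has exactly s vertices. Then: (i) λ_i(G) − λ_i(P_G) = s − t for all 1 ≤ i ≤ min{n, k}; (ii) if n = min{n,k}, then λ_i(P_G) = −s for n+1 ≤ i ≤ k; (iii) if k = min{n,k}, then λ_i(G) = −t for k+1 ≤ i ≤ n. -/
open Matrix Finset

/-- A clique partition of `G`: each member is a clique and every edge of `G`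
lies in exactly one member. -/
def IsCliquePartition {n k : ℕ} (G : SimpleGraph (Fin n)) (F : Fin k → Finset (Fin n)) : Prop :=
  (∀ j, G.IsClique ↑(F j)) ∧ ∀ ⦃u v : Fin n⦄, G.Adj u v → ∃! j, u ∈ F j ∧ v ∈ F j

/-- The vertex-clique incidence matrix of the family `F`. -/
def vcMat {n k : ℕ} (F : Fin k → Finset (Fin n)) : Matrix (Fin n) (Fin k) ℝ :=
  fun i j => if i ∈ F j then 1 else 0

/-- The clique-degree of vertex `i`: the number of members of `F` containing `i`. -/
def cliqueDeg {n k : ℕ} (F : Fin k → Finset (Fin n)) (i : Fin n) : ℕ :=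
  (Finset.univ.filter fun j => i ∈ F j).card

/-- The adjacency matrix of the clique partition graph `P_G`:
two distinct members of `F` are adjacent iff they share a vertex. -/
def pgMat {n k : ℕ} (F : Fin k → Finset (Fin n)) : Matrix (Fin k) (Fin k) ℝ :=
  fun j l => if j ≠ l ∧ (F j ∩ F l).Nonempty then 1 else 0

/-- The `i`-th largest eigenvalue (0-based) of a real symmetric matrix. -/
noncomputable def eigsDesc {N : ℕ} (A : Matrix (Fin N) (Fin N) ℝ) : Fin N → ℝ :=
  fun i => if hA : A.IsHermitian then (hA.eigenvalues ∘ Tuple.sort hA.eigenvalues) i.rev else 0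

/-- The number of negative eigenvalues (with multiplicity) of a real symmetric matrix. -/
noncomputable def negInertia {m : Type*} [Fintype m] [DecidableEq m] (A : Matrix m m ℝ) : ℕ :=
  if hA : A.IsHermitian then (Finset.univ.filter fun i => hA.eigenvalues i < 0).card else 0

/-- The number of positive eigenvalues (with multiplicity) of a real symmetric matrix. -/
noncomputable def posInertia {m : Type*} [Fintype m] [DecidableEq m] (A : Matrix m m ℝ) : ℕ :=
  if hA : A.IsHermitian then (Finset.univ.filter fun i => 0 < hA.eigenvalues i).card else 0

/-- The `i`-th largest value (0-based) of a tuple of naturals. -/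
noncomputable def sortedDesc {N : ℕ} (f : Fin N → ℕ) : Fin N → ℕ :=
  fun i => (f ∘ Tuple.sort f) i.rev

/-!
Let `N` be the vertex–clique incidence matrix. Since `F` is a clique partition,
`N Nᵀ = A(G) + t I` and `Nᵀ N = A(P_G) + s I`. Both products are positive semidefinite,
and `charpoly (Nᵀ N) = X ^ (k - n) * charpoly (N Nᵀ)` when `n ≤ k`, so the decreasingly
sorted spectrum of `Nᵀ N` is that of `N Nᵀ` followed by `k - n` zeros (symmetrically when
`k ≤ n`). Shifting back by `t` and `s` gives the three claims.
-/

theorem eq_of_antitone_of_coe_ofFn_eq {α : Type*} [LinearOrder α] {N : ℕ} {f g : Fin N → α}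
    (hf : Antitone f) (hg : Antitone g)
    (h : (List.ofFn f : Multiset α) = (List.ofFn g : Multiset α)) : f = g :=
  List.ofFn_injective <|
    (Multiset.coe_eq_coe.mp h).eq_of_sortedGE hf.sortedGE_ofFn hg.sortedGE_ofFn

theorem List.ofFn_dite_lt {α : Type*} {n k : ℕ} (hnk : n ≤ k) (f : Fin n → α) (a : α) :
    List.ofFn (fun j : Fin k => if h : (j : ℕ) < n then f ⟨j, h⟩ else a)
      = List.ofFn f ++ List.replicate (k - n) a := by
  apply List.ext_getElem
  · simp only [List.length_ofFn, List.length_append, List.length_replicate]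
    omega
  · intro i _ _
    simp only [List.getElem_ofFn, List.getElem_append, List.length_ofFn, List.getElem_replicate]

namespace Matrix

open Polynomial

variable {N : ℕ} {A : Matrix (Fin N) (Fin N) ℝ}

theorem IsHermitian.eigsDesc_eq (hA : A.IsHermitian) :
    eigsDesc A =
      hA.eigenvalues ∘ ⇑(Tuple.sort hA.eigenvalues * Fin.revPerm : Equiv.Perm (Fin N)) := by
  ext i
  simp only [eigsDesc, dif_pos hA]
  rfl

theorem antitone_eigsDesc (A : Matrix (Fin N) (Fin N) ℝ) : Antitone (eigsDesc A) := by
  by_cases hA : A.IsHermitian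
  · rw [hA.eigsDesc_eq]
    exact (Tuple.monotone_sort hA.eigenvalues).comp_antitone (Fin.rev_anti (n := N))
  · intro i j _
    simp only [eigsDesc, dif_neg hA, le_refl]

theorem IsHermitian.roots_charpoly_eq_eigsDesc (hA : A.IsHermitian) :
    A.charpoly.roots = (List.ofFn (eigsDesc A) : Multiset ℝ) := by
  rw [hA.roots_charpoly_eq_eigenvalues, RCLike.ofReal_real_eq_id, Function.id_comp,
    Fin.univ_val_map, hA.eigsDesc_eq, Multiset.coe_eq_coe]
  exact ((Tuple.sort hA.eigenvalues * Fin.revPerm).ofFn_comp_perm hA.eigenvalues).symm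

theorem IsHermitian.eigsDesc_eq_of_antitone (hA : A.IsHermitian) {f : Fin N → ℝ}
    (hf : Antitone f) (h : A.charpoly.roots = (List.ofFn f : Multiset ℝ)) : eigsDesc A = f :=
  eq_of_antitone_of_coe_ofFn_eq (antitone_eigsDesc A) hf (hA.roots_charpoly_eq_eigsDesc ▸ h)

theorem PosSemidef.eigsDesc_nonneg (hA : A.PosSemidef) (i : Fin N) : 0 ≤ eigsDesc A i := by
  rw [hA.1.eigsDesc_eq]
  exact hA.eigenvalues_nonneg _

theorem IsHermitian.eigsDesc_add_smul_one (hA : A.IsHermitian) (c : ℝ) (i : Fin N) :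
    eigsDesc (A + c • 1) i = eigsDesc A i + c := by
  have hroots : (A + c • 1).charpoly.roots = (A.charpoly.roots).map (fun x => 1 * x + c) := by
    have h := charpoly_sub_scalar (A + c • 1) c
    rw [scalar_apply, ← smul_one_eq_diagonal, add_sub_cancel_right, ← one_mul X, ← C_1] at h
    rw [h, map_roots_comp_C_mul_X_add_C _ _ _ isUnit_one]
  have := (hA.add (isHermitian_one.smul (IsSelfAdjoint.all c))).eigsDesc_eq_of_antitone
    (f := fun i => eigsDesc A i + c) (fun i j hij => by simpa using antitone_eigsDesc A hij) (by
      rw [hroots, hA.roots_charpoly_eq_eigsDesc, Multiset.map_coe, List.map_ofFn]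
      simp [Function.comp_def])
  exact congrFun this i

variable {n k : ℕ}

theorem eigsDesc_transpose_mul_self_of_le (M : Matrix (Fin n) (Fin k) ℝ) (hnk : n ≤ k) :
    eigsDesc (Mᵀ * M) =
      fun j : Fin k => if h : (j : ℕ) < n then eigsDesc (M * Mᵀ) ⟨j, h⟩ else 0 := by
  have hM : Mᴴ = Mᵀ := conjTranspose_eq_transpose_of_trivial M
  have hpsd : (M * Mᵀ).PosSemidef := hM ▸ posSemidef_self_mul_conjTranspose M
  have hpad : Antitone fun j : Fin k =>
      if h : (j : ℕ) < n then eigsDesc (M * Mᵀ) ⟨j, h⟩ else 0 := by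
    intro i j hij
    by_cases hj : (j : ℕ) < n
    · have hi : (i : ℕ) < n := lt_of_le_of_lt hij hj
      simp only [dif_pos hi, dif_pos hj]
      exact antitone_eigsDesc _ hij
    · simp only [dif_neg hj]
      split_ifs
      exacts [hpsd.eigsDesc_nonneg _, le_rfl]
  refine (hM ▸ isHermitian_conjTranspose_mul_self M).eigsDesc_eq_of_antitone hpad ?_
  have hchar := charpoly_mul_comm_of_le Mᵀ M (by simpa using hnk)
  simp only [Fintype.card_fin] at hchar
  rw [hchar, roots_mul (mul_ne_zero (pow_ne_zero _ X_ne_zero) (charpoly_monic _).ne_zero),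
    roots_X_pow, hpsd.1.roots_charpoly_eq_eigsDesc, List.ofFn_dite_lt hnk, ← Multiset.coe_add,
    Multiset.coe_replicate, Multiset.nsmul_singleton, add_comm]

theorem eigsDesc_mul_transpose_eq_eigsDesc_transpose_mul (M : Matrix (Fin n) (Fin k) ℝ)
    {i : ℕ} (hn : i < n) (hk : i < k) :
    eigsDesc (M * Mᵀ) ⟨i, hn⟩ = eigsDesc (Mᵀ * M) ⟨i, hk⟩ := by
  rcases le_total n k with hnk | hkn
  · simp [eigsDesc_transpose_mul_self_of_le M hnk, hn]
  · have h := eigsDesc_transpose_mul_self_of_le Mᵀ hkn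
    rw [transpose_transpose] at h
    simp [h, hk]

theorem eigsDesc_transpose_mul_self_eq_zero (M : Matrix (Fin n) (Fin k) ℝ) {i : ℕ}
    (hk : i < k) (hn : n ≤ i) : eigsDesc (Mᵀ * M) ⟨i, hk⟩ = 0 := by
  rw [eigsDesc_transpose_mul_self_of_le M (hn.trans hk.le)]
  simp [Nat.not_lt.mpr hn]

end Matrix

section CliquePartition

variable {n k : ℕ}

theorem vcMat_mul_transpose_apply (F : Fin k → Finset (Fin n)) (i i' : Fin n) :
    (vcMat F * (vcMat F)ᵀ) i i' = #{j | i ∈ F j ∧ i' ∈ F j} := by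
  simp [mul_apply, vcMat, ← ite_and, and_comm]

theorem transpose_vcMat_mul_apply (F : Fin k → Finset (Fin n)) (j l : Fin k) :
    ((vcMat F)ᵀ * vcMat F) j l = #(F j ∩ F l) := by
  simp [mul_apply, vcMat, ← ite_and, Finset.filter_and, inter_comm]

theorem isHermitian_pgMat (F : Fin k → Finset (Fin n)) : (pgMat F).IsHermitian := by
  ext j l
  simp [pgMat, ne_comm, inter_comm]

variable {G : SimpleGraph (Fin n)} {F : Fin k → Finset (Fin n)}

theorem IsCliquePartition.card_filter_mem_mem_of_ne [DecidableRel G.Adj]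
    (hF : IsCliquePartition G F) {i i' : Fin n} (hii' : i ≠ i') :
    #{j | i ∈ F j ∧ i' ∈ F j} = if G.Adj i i' then 1 else 0 := by
  split_ifs with hadj
  · obtain ⟨j, hj, huniq⟩ := hF.2 hadj
    exact card_eq_one.mpr ⟨j, by ext; simpa using ⟨huniq _, fun h => h ▸ hj⟩⟩
  · exact card_eq_zero.mpr <| filter_eq_empty_iff.mpr fun j _ ⟨hi, hi'⟩ =>
      hadj (hF.1 j hi hi' hii')

theorem IsCliquePartition.card_inter_le_one (hF : IsCliquePartition G F) {j l : Fin k}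
    (hjl : j ≠ l) : #(F j ∩ F l) ≤ 1 := by
  refine card_le_one.mpr fun u hu v hv => by_contra fun huv => hjl ?_
  rw [mem_inter] at hu hv
  obtain ⟨_, _, huniq⟩ := hF.2 (hF.1 j hu.1 hv.1 huv)
  exact (huniq j ⟨hu.1, hv.1⟩).trans (huniq l ⟨hu.2, hv.2⟩).symm

theorem IsCliquePartition.vcMat_mul_transpose [DecidableRel G.Adj]
    (hF : IsCliquePartition G F) :
    vcMat F * (vcMat F)ᵀ = G.adjMatrix ℝ + diagonal fun i => (cliqueDeg F i : ℝ) := by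
  ext i i'
  rw [vcMat_mul_transpose_apply]
  by_cases hii' : i = i'
  · subst hii'
    simp [cliqueDeg]
  · rw [hF.card_filter_mem_mem_of_ne hii']
    simp [hii']

theorem IsCliquePartition.transpose_vcMat_mul (hF : IsCliquePartition G F) :
    (vcMat F)ᵀ * vcMat F = pgMat F + diagonal fun j => ((F j).card : ℝ) := by
  ext j l
  rw [transpose_vcMat_mul_apply]
  by_cases hjl : j = l
  · subst hjl
    simp [pgMat]
  · rcases Nat.le_one_iff_eq_zero_or_eq_one.mp (hF.card_inter_le_one hjl) with h | h
    · simp [pgMat, hjl, card_eq_zero.mp h]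
    · simp [pgMat, hjl, h, card_pos.mp (by omega : 0 < #(F j ∩ F l))]

end CliquePartition

theorem stmt_3 {n k s t : ℕ} (G : SimpleGraph (Fin n)) [DecidableRel G.Adj]
    (F : Fin k → Finset (Fin n)) (hF : IsCliquePartition G F)
    (ht : ∀ i, cliqueDeg F i = t) (hs : ∀ j, (F j).card = s) :
    (∀ (i : ℕ) (hin : i < n) (hik : i < k),
        eigsDesc (G.adjMatrix ℝ) ⟨i, hin⟩ - eigsDesc (pgMat F) ⟨i, hik⟩ = (s : ℝ) - t) ∧
    (n ≤ k → ∀ (i : ℕ) (hik : i < k), n ≤ i →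
        eigsDesc (pgMat F) ⟨i, hik⟩ = -(s : ℝ)) ∧
    (k ≤ n → ∀ (i : ℕ) (hin : i < n), k ≤ i →
        eigsDesc (G.adjMatrix ℝ) ⟨i, hin⟩ = -(t : ℝ)) := by
  set N := vcMat F
  have hNNt : N * Nᵀ = G.adjMatrix ℝ + (t : ℝ) • 1 := by
    simp [N, hF.vcMat_mul_transpose, smul_one_eq_diagonal, ht]
  have hNtN : Nᵀ * N = pgMat F + (s : ℝ) • 1 := by
    simp [N, hF.transpose_vcMat_mul, smul_one_eq_diagonal, hs]
  have hadj (i : ℕ) (hi : i < n) :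
      eigsDesc (G.adjMatrix ℝ) ⟨i, hi⟩ = eigsDesc (N * Nᵀ) ⟨i, hi⟩ - t := by
    rw [hNNt, (G.isHermitian_adjMatrix ℝ).eigsDesc_add_smul_one]
    ring
  have hpg (i : ℕ) (hi : i < k) :
      eigsDesc (pgMat F) ⟨i, hi⟩ = eigsDesc (Nᵀ * N) ⟨i, hi⟩ - s := by
    rw [hNtN, (isHermitian_pgMat F).eigsDesc_add_smul_one]
    ring
  refine ⟨fun i hin hik => ?_, fun _ i hik hni => ?_, fun _ i hin hki => ?_⟩
  · rw [hadj, hpg, eigsDesc_mul_transpose_eq_eigsDesc_transpose_mul N hin hik]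
    ring
  · rw [hpg, eigsDesc_transpose_mul_self_eq_zero N hik hni]
    ring
  · have h := eigsDesc_transpose_mul_self_eq_zero Nᵀ hin hki
    rw [transpose_transpose] at h
    rw [hadj, h]
    ring
end

section
/- Let G be a simple graph on n vertices with negative inertia ν^− and let F be a clique partition of G with clique-degrees t_1^F ≥ t_2^F ≥ ... ≥ t_n^F. Then for all 1 ≤ i ≤ ν^−, λ_{n−i+1}(G) ≥ −t_i^F. Moreover, if G is clique-regular with respect to F and ν^− = n − |F|, then equality holds for all 1 ≤ i ≤ ν^−. -/
/-!
Let `N` be the vertex–clique incidence matrix of the clique partition and `D` the diagonal matrix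
of clique-degrees; then `A + D = N Nᵀ`. Hence `xᵀ A x ≥ -t ‖x‖²` on the subspace of vectors vanishing
at the vertices of clique-degree `> t`. For `t = t_i` there are at most `i` such vertices, so by
the min-max principle at most `i` eigenvalues lie below `-t_i`, which is the lower bound.
If every clique-degree equals `t`, then `A + t I = N Nᵀ`, so `xᵀ A x = -t ‖x‖²` on `ker Nᵀ`, of
codimension at most `|F|`; hence at most `|F|` eigenvalues exceed `-t`, and the `n - |F|` smallest
eigenvalues, bounded below by `-t`, all equal `-t`.
-/

open Matrix Finset

theorem Finset.eq_zero_of_sum_mul_sq_nonpos {ι : Type*} (s : Finset ι) {a y : ι → ℝ}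
    (ha : ∀ j ∈ s, y j ≠ 0 → 0 < a j) (hsum : ∑ j ∈ s, a j * y j ^ 2 ≤ 0) :
    ∀ j ∈ s, y j = 0 := by
  have hterm : ∀ j ∈ s, 0 ≤ a j * y j ^ 2 := fun j hj => by
    by_cases hy : y j = 0
    · simp [hy]
    · exact mul_nonneg (ha j hj hy).le (sq_nonneg _)
  intro j hj
  by_contra hy
  have := (sum_eq_zero_iff_of_nonneg hterm).mp (le_antisymm hsum (sum_nonneg hterm)) j hj
  exact hy (pow_eq_zero_iff two_ne_zero |>.mp ((mul_eq_zero.mp this).resolve_left (ha j hj hy).ne'))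

section EigenvalueCount

variable {n m : Type*} [Fintype n] [DecidableEq n] [Fintype m]

theorem card_le_card_of_forall_mulVec_eq_zero (L : (n → ℝ) →ₗ[ℝ] m → ℝ) (W : Matrix n n ℝ)
    (T : Finset n) (h : ∀ x, L x = 0 → (∀ j ∉ T, (W *ᵥ x) j = 0) → x = 0) :
    #T ≤ Fintype.card m := by
  let outside : (n → ℝ) →ₗ[ℝ] ({j // j ∉ T} → ℝ) :=
    LinearMap.funLeft ℝ ℝ Subtype.val ∘ₗ W.mulVecLin
  have hinj : Function.Injective (L.prod outside) := by
    rw [← LinearMap.ker_eq_bot, LinearMap.ker_eq_bot']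
    intro x hx
    simp only [LinearMap.prod_apply, Function.prod, Prod.mk_eq_zero] at hx
    exact h x hx.1 fun j hj => congrFun hx.2 ⟨j, hj⟩
  have := LinearMap.finrank_le_finrank_of_injective hinj
  simp only [Module.finrank_prod, Module.finrank_fintype_fun_eq_card, Fintype.card_subtype_compl,
    Fintype.card_coe] at this
  have := T.card_le_univ
  omega

namespace Matrix.IsHermitian

variable {M : Matrix n n ℝ} (hM : M.IsHermitian)

theorem dotProduct_mulVec_eq_sum_eigenvalues (x : n → ℝ) :
    x ⬝ᵥ M *ᵥ x = ∑ j, hM.eigenvalues j * ((hM.eigenvectorUnitary : Matrix n n ℝ)ᵀ *ᵥ x) j ^ 2 := by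
  set U : Matrix n n ℝ := ↑hM.eigenvectorUnitary
  have hMU : M = U * diagonal hM.eigenvalues * Uᵀ := by
    conv_lhs => rw [hM.spectral_theorem]
    simp [U, Unitary.conjStarAlgAut_apply, star_eq_conjTranspose]
  conv_lhs => rw [hMU, ← mulVec_mulVec, ← mulVec_mulVec, dotProduct_mulVec, ← mulVec_transpose]
  simp [dotProduct, mulVec_diagonal, sq, mul_left_comm]

theorem dotProduct_self_eq_sum_sq (x : n → ℝ) :
    x ⬝ᵥ x = ∑ j, ((hM.eigenvectorUnitary : Matrix n n ℝ)ᵀ *ᵥ x) j ^ 2 := by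
  set U : Matrix n n ℝ := ↑hM.eigenvectorUnitary
  have hU : U * Uᵀ = 1 := mem_unitaryGroup_iff.mp hM.eigenvectorUnitary.2
  calc x ⬝ᵥ x = x ⬝ᵥ (U * Uᵀ) *ᵥ x := by rw [hU, one_mulVec]
    _ = (Uᵀ *ᵥ x) ⬝ᵥ (Uᵀ *ᵥ x) := by rw [← mulVec_mulVec, dotProduct_mulVec, ← mulVec_transpose]
    _ = _ := by simp only [dotProduct, sq]

theorem eq_zero_of_sum_mul_sq_nonpos (x : n → ℝ) {w : n → ℝ}
    (hw : ∀ j, ((hM.eigenvectorUnitary : Matrix n n ℝ)ᵀ *ᵥ x) j ≠ 0 → 0 < w j)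
    (hsum : ∑ j, w j * ((hM.eigenvectorUnitary : Matrix n n ℝ)ᵀ *ᵥ x) j ^ 2 ≤ 0) : x = 0 := by
  have hy := univ.eq_zero_of_sum_mul_sq_nonpos (fun j _ => hw j) hsum
  rw [← dotProduct_self_eq_zero, hM.dotProduct_self_eq_sum_sq]
  exact sum_eq_zero fun j hj => by rw [hy j hj, sq, zero_mul]

/-- The vectors killed by `L` form a subspace of codimension at most `card m` on which the Rayleigh
quotient is at least `c`; it meets the span of the eigenvectors with eigenvalue `< c` trivially. -/
theorem card_eigenvalues_lt_le (L : (n → ℝ) →ₗ[ℝ] m → ℝ) (c : ℝ)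
    (h : ∀ x, L x = 0 → c * (x ⬝ᵥ x) ≤ x ⬝ᵥ M *ᵥ x) :
    #{j | hM.eigenvalues j < c} ≤ Fintype.card m := by
  refine card_le_card_of_forall_mulVec_eq_zero L (hM.eigenvectorUnitary : Matrix n n ℝ)ᵀ _
    fun x hLx hout => hM.eq_zero_of_sum_mul_sq_nonpos x (w := fun j => c - hM.eigenvalues j)
      (fun j hj => sub_pos.mpr ?_) ?_
  · by_contra hlt
    exact hj (hout j (by simpa using hlt))
  · have := h x hLx
    rw [hM.dotProduct_mulVec_eq_sum_eigenvalues, hM.dotProduct_self_eq_sum_sq, mul_sum] at this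
    simpa only [sub_mul, sum_sub_distrib, sub_nonpos] using this

theorem card_lt_eigenvalues_le (L : (n → ℝ) →ₗ[ℝ] m → ℝ) (c : ℝ)
    (h : ∀ x, L x = 0 → x ⬝ᵥ M *ᵥ x ≤ c * (x ⬝ᵥ x)) :
    #{j | c < hM.eigenvalues j} ≤ Fintype.card m := by
  refine card_le_card_of_forall_mulVec_eq_zero L (hM.eigenvectorUnitary : Matrix n n ℝ)ᵀ _
    fun x hLx hout => hM.eq_zero_of_sum_mul_sq_nonpos x (w := fun j => hM.eigenvalues j - c)
      (fun j hj => sub_pos.mpr ?_) ?_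
  · by_contra hlt
    exact hj (hout j (by simpa using hlt))
  · have := h x hLx
    rw [hM.dotProduct_mulVec_eq_sum_eigenvalues, hM.dotProduct_self_eq_sum_sq, mul_sum] at this
    simpa only [sub_mul, sum_sub_distrib, sub_nonpos] using this

end Matrix.IsHermitian

end EigenvalueCount

theorem Fin.lt_card_filter_iff {N : ℕ} {P : Fin N → Prop} [DecidablePred P]
    (hP : ∀ ⦃p q⦄, p ≤ q → P q → P p) (i : Fin N) : (i : ℕ) < #{p | P p} ↔ P i := by
  constructor
  · intro hi
    by_contra hPi
    have hsub : ({p | P p} : Finset (Fin N)) ⊆ Iio i := fun p hp => by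
      simp only [mem_filter, mem_univ, true_and] at hp
      exact mem_Iio.mpr (lt_of_not_ge fun hip => hPi (hP hip hp))
    have := card_le_card hsub
    rw [Fin.card_Iio] at this
    omega
  · intro hPi
    have hsub : Iic i ⊆ ({p | P p} : Finset (Fin N)) := fun p hp => by
      simpa using hP (mem_Iic.mp hp) hPi
    have := card_le_card hsub
    rw [Fin.card_Iic] at this
    omega

namespace Tuple

variable {α : Type*} [LinearOrder α] {N : ℕ}

theorem lt_card_filter_lt_iff (f : Fin N → α) (i : Fin N) (c : α) :
    (i : ℕ) < #{j | f j < c} ↔ f (sort f i) < c := by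
  rw [← card_equiv (sort f) (s := {p | f (sort f p) < c}) (by simp)]
  exact Fin.lt_card_filter_iff (fun _ _ hpq h => (monotone_sort f hpq).trans_lt h) i

theorem lt_card_filter_le_iff (f : Fin N → α) (i : Fin N) (c : α) :
    (i : ℕ) < #{j | f j ≤ c} ↔ f (sort f i) ≤ c := by
  rw [← card_equiv (sort f) (s := {p | f (sort f p) ≤ c}) (by simp)]
  exact Fin.lt_card_filter_iff (fun _ _ hpq h => (monotone_sort f hpq).trans h) i

end Tuple

theorem card_sortedDesc_lt_le {N : ℕ} (f : Fin N → ℕ) (i : Fin N) :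
    #{u | sortedDesc f i < f u} ≤ i := by
  have hle := (Tuple.lt_card_filter_le_iff f i.rev (sortedDesc f i)).mpr le_rfl
  have hsplit := card_filter_add_card_filter_not (s := univ) (p := fun u => f u ≤ sortedDesc f i)
  simp only [not_le, card_univ, Fintype.card_fin, Fin.val_rev] at hsplit hle
  omega

theorem eigsDesc_eq_sort_eigenvalues {N : ℕ} {A : Matrix (Fin N) (Fin N) ℝ} (hA : A.IsHermitian)
    (i : Fin N) :
    eigsDesc A ⟨N - 1 - i, by omega⟩ = hA.eigenvalues (Tuple.sort hA.eigenvalues i) := by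
  simp only [eigsDesc, dif_pos hA, Function.comp_apply]
  congr
  ext
  simp only [Fin.val_rev]
  omega

namespace IsCliquePartition

variable {n k : ℕ} {G : SimpleGraph (Fin n)} [DecidableRel G.Adj] {F : Fin k → Finset (Fin n)}

theorem vcMat_mul_transpose_s9 (hF : IsCliquePartition G F) :
    vcMat F * (vcMat F)ᵀ = G.adjMatrix ℝ + diagonal fun u => (cliqueDeg F u : ℝ) := by
  ext u w
  have hentry : (vcMat F * (vcMat F)ᵀ) u w = #{j | u ∈ F j ∧ w ∈ F j} := by
    simp [mul_apply, vcMat, ← ite_and, and_comm]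
  rw [hentry]
  rcases eq_or_ne u w with rfl | huw
  · simp [cliqueDeg]
  have hcount : #{j | u ∈ F j ∧ w ∈ F j} = if G.Adj u w then 1 else 0 := by
    split_ifs with hadj
    · exact (Fintype.existsUnique_iff_card_one _).mp (hF.2 hadj)
    · exact card_eq_zero.mpr (filter_eq_empty_iff.mpr fun j _ ⟨hu, hw⟩ =>
        hadj (hF.1 j hu hw huw))
  simp [hcount, huw]

theorem dotProduct_adjMatrix_mulVec (hF : IsCliquePartition G F) (x : Fin n → ℝ) :
    x ⬝ᵥ G.adjMatrix ℝ *ᵥ x =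
      (vcMat F)ᵀ *ᵥ x ⬝ᵥ (vcMat F)ᵀ *ᵥ x - ∑ u, (cliqueDeg F u : ℝ) * x u ^ 2 := by
  have hA : G.adjMatrix ℝ = vcMat F * (vcMat F)ᵀ - diagonal fun u => (cliqueDeg F u : ℝ) := by
    rw [hF.vcMat_mul_transpose_s9, add_sub_cancel_right]
  rw [hA, sub_mulVec, dotProduct_sub, ← mulVec_mulVec, dotProduct_mulVec, ← mulVec_transpose]
  simp [dotProduct, mulVec_diagonal, sq, mul_left_comm]

theorem card_eigenvalues_lt_neg_le (hF : IsCliquePartition G F)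
    (hA : (G.adjMatrix ℝ).IsHermitian) (t : ℝ) :
    #{j | hA.eigenvalues j < -t} ≤ #{u | t < cliqueDeg F u} := by
  have := hA.card_eigenvalues_lt_le
    (LinearMap.funLeft ℝ ℝ (Subtype.val : {u // t < cliqueDeg F u} → Fin n)) (-t) fun x hx => by
      have hdeg : ∑ u, (cliqueDeg F u : ℝ) * x u ^ 2 ≤ t * (x ⬝ᵥ x) := by
        rw [dotProduct, mul_sum]
        refine sum_le_sum fun u _ => ?_
        rcases le_or_gt (cliqueDeg F u : ℝ) t with hu | hu
        · rw [← sq]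
          exact mul_le_mul_of_nonneg_right hu (sq_nonneg _)
        · simp [show x u = 0 from congrFun hx ⟨u, hu⟩]
      rw [hF.dotProduct_adjMatrix_mulVec]
      have hgram := dotProduct_self_star_nonneg ((vcMat F)ᵀ *ᵥ x)
      rw [star_trivial] at hgram
      linarith
  simpa [Fintype.card_subtype] using this

theorem neg_sortedDesc_le_sort_eigenvalues (hF : IsCliquePartition G F)
    (hA : (G.adjMatrix ℝ).IsHermitian) (i : Fin n) :
    -(sortedDesc (cliqueDeg F) i : ℝ) ≤ hA.eigenvalues (Tuple.sort hA.eigenvalues i) := by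
  by_contra! h
  have hlow := (Tuple.lt_card_filter_lt_iff hA.eigenvalues i _).mpr h
  have hcount := hF.card_eigenvalues_lt_neg_le hA (sortedDesc (cliqueDeg F) i)
  have hdeg := card_sortedDesc_lt_le (cliqueDeg F) i
  simp only [Nat.cast_lt] at hcount
  omega

theorem sort_eigenvalues_le_of_cliqueDeg_eq (hF : IsCliquePartition G F)
    (hA : (G.adjMatrix ℝ).IsHermitian) {t : ℕ} (hreg : ∀ u, cliqueDeg F u = t) (i : Fin n)
    (hi : (i : ℕ) < n - k) : hA.eigenvalues (Tuple.sort hA.eigenvalues i) ≤ -t := by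
  have hhigh : #{j | -(t : ℝ) < hA.eigenvalues j} ≤ k := by
    have := hA.card_lt_eigenvalues_le ((vcMat F)ᵀ.mulVecLin) (-t) fun x hx => by
      rw [hF.dotProduct_adjMatrix_mulVec, show (vcMat F)ᵀ *ᵥ x = 0 from hx]
      simp [hreg, dotProduct, mul_sum, sq]
    simpa using this
  have hsplit := card_filter_add_card_filter_not (s := univ)
    (p := fun j => hA.eigenvalues j ≤ -(t : ℝ))
  simp only [not_le, card_univ, Fintype.card_fin] at hsplit
  exact (Tuple.lt_card_filter_le_iff hA.eigenvalues i _).mp (by omega)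

end IsCliquePartition

theorem stmt_9 {n k : ℕ} (G : SimpleGraph (Fin n)) [DecidableRel G.Adj]
    (F : Fin k → Finset (Fin n)) (hF : IsCliquePartition G F) :
    (∀ i : Fin n, (i : ℕ) < negInertia (G.adjMatrix ℝ) →
      -(sortedDesc (cliqueDeg F) i : ℝ) ≤
        eigsDesc (G.adjMatrix ℝ) ⟨n - 1 - (i : ℕ), by have := i.isLt; omega⟩) ∧
    ((∀ a b, cliqueDeg F a = cliqueDeg F b) → negInertia (G.adjMatrix ℝ) = n - k →
      ∀ i : Fin n, (i : ℕ) < negInertia (G.adjMatrix ℝ) →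
        eigsDesc (G.adjMatrix ℝ) ⟨n - 1 - (i : ℕ), by have := i.isLt; omega⟩ =
          -(sortedDesc (cliqueDeg F) i : ℝ)) := by
  have hA := G.isHermitian_adjMatrix ℝ
  have hlow := hF.neg_sortedDesc_le_sort_eigenvalues hA
  refine ⟨fun i _ => ?_, fun hreg hnu i hi => ?_⟩
  · rw [eigsDesc_eq_sort_eigenvalues hA]
    exact hlow i
  · rw [eigsDesc_eq_sort_eigenvalues hA]
    exact le_antisymm
      (hF.sort_eigenvalues_le_of_cliqueDeg_eq hA (fun u => hreg u _) i (hnu ▸ hi)) (hlow i)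
end

section
/- Let G be a simple graph on n vertices with vertex degrees d_1 ≥ d_2 ≥ ... ≥ d_n, positive inertia ν^+ and negative inertia ν^−, and set h = min{ν^+, ν^−}. Then the energy of G satisfies E(G) ≤ 2 Σ_{i=1}^{h} d_i. -/
open Matrix Finset

/-!
Since `tr A = 0`, the energy is `2 ∑_{λ > 0} λ = -2 ∑_{λ < 0} λ`. Let `P` be the orthogonal
projection onto the span of the eigenvectors with positive eigenvalue. As the Laplacian
`L = D - A` is positive semidefinite, `∑_{λ > 0} λ = tr (P A) = tr (P D) - tr (P L) ≤ ∑ P_ii d_i`,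
and since `0 ≤ P_ii ≤ 1` with `∑ P_ii = ν⁺`, this is at most the sum of the `ν⁺` largest degrees.
The negative eigenvalues are treated the same way, with the signless Laplacian `D + A = N Nᵀ`
(`N` the vertex-edge incidence matrix) in place of `L`.
-/

namespace Matrix

variable {m : Type*} [Fintype m]

lemma PosSemidef.trace_mul_nonneg {P B : Matrix m m ℝ} (hP : P.PosSemidef) (hB : B.PosSemidef) :
    0 ≤ (P * B).trace := by
  classical
  open scoped MatrixOrder in
  obtain ⟨X, rfl⟩ := CStarAlgebra.nonneg_iff_eq_star_mul_self.mp hP.nonneg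
  rw [mul_assoc, trace_mul_comm, star_eq_conjTranspose]
  exact (hB.mul_mul_conjTranspose_same X).trace_nonneg

variable [DecidableEq m]

lemma trace_conjStarAlgAut (U : unitary (Matrix m m ℝ)) (X : Matrix m m ℝ) :
    (Unitary.conjStarAlgAut ℝ _ U X).trace = X.trace := by
  rw [Unitary.conjStarAlgAut_apply, trace_mul_cycle, Unitary.coe_star_mul_self, one_mul]

lemma PosSemidef.conjStarAlgAut {X : Matrix m m ℝ} (hX : X.PosSemidef)
    (U : unitary (Matrix m m ℝ)) :
    (Unitary.conjStarAlgAut ℝ _ U X).PosSemidef := by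
  rw [Unitary.conjStarAlgAut_apply, star_eq_conjTranspose]
  exact hX.mul_mul_conjTranspose_same _

namespace IsHermitian

variable {A : Matrix m m ℝ} (hA : A.IsHermitian)

noncomputable def spectralProj (I : Finset m) : Matrix m m ℝ :=
  Unitary.conjStarAlgAut ℝ _ hA.eigenvectorUnitary (diagonal fun i => if i ∈ I then 1 else 0)

lemma posSemidef_spectralProj (I : Finset m) : (hA.spectralProj I).PosSemidef :=
  (PosSemidef.diagonal fun i => by split_ifs <;> norm_num).conjStarAlgAut _

lemma spectralProj_add_spectralProj_compl (I : Finset m) :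
    hA.spectralProj I + hA.spectralProj Iᶜ = 1 := by
  rw [spectralProj, spectralProj, ← map_add, diagonal_add,
    ← map_one (Unitary.conjStarAlgAut ℝ _ hA.eigenvectorUnitary), ← diagonal_one]
  congr 2 with i
  by_cases hi : i ∈ I <;> simp [hi]

lemma spectralProj_apply_self_le_one (I : Finset m) (i : m) : hA.spectralProj I i i ≤ 1 := by
  have h := congrFun (congrFun (hA.spectralProj_add_spectralProj_compl I) i) i
  rw [add_apply, one_apply_eq] at h
  linarith [(hA.posSemidef_spectralProj Iᶜ).diag_nonneg (i := i)]

lemma trace_spectralProj (I : Finset m) : (hA.spectralProj I).trace = #I := by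
  rw [spectralProj, trace_conjStarAlgAut, trace_diagonal]
  simp

lemma trace_spectralProj_mul (I : Finset m) :
    (hA.spectralProj I * A).trace = ∑ i ∈ I, hA.eigenvalues i := by
  conv_lhs => arg 1; arg 2; rw [hA.spectral_theorem]
  rw [spectralProj, ← map_mul, trace_conjStarAlgAut, diagonal_mul_diagonal, trace_diagonal]
  simp [sum_ite_mem]

end IsHermitian
end Matrix

lemma sum_mul_le_sum_of_forall_le {ι : Type*} [Fintype ι] [DecidableEq ι] {w f : ι → ℝ}
    {S : Finset ι} (hw0 : ∀ i, 0 ≤ w i) (hw1 : ∀ i, w i ≤ 1) (hsum : ∑ i, w i = #S)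
    (hS : ∀ i ∈ S, ∀ j ∉ S, f j ≤ f i) :
    ∑ i, w i * f i ≤ ∑ i ∈ S, f i := by
  obtain ⟨t, hSt, htS⟩ : ∃ t, (∀ i ∈ S, t ≤ f i) ∧ ∀ j ∉ S, f j ≤ t := by
    rcases S.eq_empty_or_nonempty with rfl | hne
    · exact ⟨∑ i, |f i|, by simp, fun j _ =>
        (le_abs_self _).trans (single_le_sum (fun i _ => abs_nonneg (f i)) (mem_univ j))⟩
    · exact ⟨S.inf' hne f, fun i hi => inf'_le f hi,
        fun j hj => le_inf' hne f fun i hi => hS i hi j hj⟩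
  calc ∑ i, w i * f i = ∑ i, w i * (f i - t) + (∑ i, w i) * t := by
        rw [sum_mul, ← sum_add_distrib]
        exact sum_congr rfl fun i _ => by ring
    _ ≤ ∑ i, (if i ∈ S then f i - t else 0) + #S * t := by
        rw [hsum]
        gcongr with i
        split_ifs with hi
        · exact mul_le_of_le_one_left (sub_nonneg.2 (hSt i hi)) (hw1 i)
        · exact mul_nonpos_of_nonneg_of_nonpos (hw0 i) (sub_nonpos.2 (htS i hi))
    _ = ∑ i ∈ S, f i := by
        rw [sum_ite_mem, univ_inter, sum_sub_distrib, sum_const, nsmul_eq_mul]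
        ring

lemma antitone_sortedDesc {n : ℕ} (d : Fin n → ℕ) : Antitone (sortedDesc d) :=
  fun _ _ hij => Tuple.monotone_sort d (Fin.rev_le_rev.2 hij)

lemma sum_mul_le_sum_sortedDesc {n h : ℕ} (d : Fin n → ℕ) {w : Fin n → ℝ}
    (hw0 : ∀ i, 0 ≤ w i) (hw1 : ∀ i, w i ≤ 1) (hsum : ∑ i, w i = h) :
    ∑ i, w i * d i ≤ ∑ i ∈ univ.filter (fun i : Fin n => (i : ℕ) < h), (sortedDesc d i : ℝ) := by
  set T := univ.filter (fun i : Fin n => (i : ℕ) < h)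
  have hhn : h ≤ n := by
    have : ∑ i, w i ≤ ∑ _i : Fin n, (1 : ℝ) := sum_le_sum fun i _ => hw1 i
    simp only [hsum, sum_const, card_univ, Fintype.card_fin, nsmul_eq_mul, mul_one] at this
    exact_mod_cast this
  have hT : #T = h := by rw [Fin.card_filter_val_lt]; omega
  let e : Fin n ≃ Fin n := Fin.revPerm.trans (Tuple.sort d)
  have hsorted : ∑ i ∈ T, (sortedDesc d i : ℝ) = ∑ j ∈ T.map e.toEmbedding, (d j : ℝ) :=
    (sum_map T e.toEmbedding fun j => (d j : ℝ)).symm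
  rw [hsorted]
  refine sum_mul_le_sum_of_forall_le hw0 hw1 (by rw [card_map, hT, hsum]) ?_
  intro _ hi j hj
  obtain ⟨i, hiT, rfl⟩ := mem_map.1 hi
  have hjT : e.symm j ∉ T := fun h' => hj (mem_map.2 ⟨_, h', e.apply_symm_apply j⟩)
  simp only [T, mem_filter, mem_univ, true_and, not_lt] at hiT hjT
  have := antitone_sortedDesc d (show i ≤ e.symm j from Fin.le_def.2 (by omega))
  rw [← e.apply_symm_apply j]
  exact_mod_cast this

lemma trace_mul_le_sum_sortedDesc {n h : ℕ} (d : Fin n → ℕ) {P B : Matrix (Fin n) (Fin n) ℝ}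
    (hP : P.PosSemidef) (hP1 : ∀ i, P i i ≤ 1) (htr : P.trace = h)
    (hB : (diagonal (fun i => (d i : ℝ)) - B).PosSemidef) :
    (P * B).trace ≤ ∑ i ∈ univ.filter (fun i : Fin n => (i : ℕ) < h), (sortedDesc d i : ℝ) :=
  calc (P * B).trace ≤ (P * B).trace + (P * (diagonal (fun i => (d i : ℝ)) - B)).trace :=
        le_add_of_nonneg_right (hP.trace_mul_nonneg hB)
    _ = ∑ i, P i i * d i := by
        rw [← trace_add, ← mul_add, add_sub_cancel]
        simp only [trace, diag_apply, mul_diagonal]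
    _ ≤ _ := sum_mul_le_sum_sortedDesc d (fun i => hP.diag_nonneg) hP1 htr

namespace Matrix.IsHermitian

variable {n : ℕ} {A : Matrix (Fin n) (Fin n) ℝ} (hA : A.IsHermitian)

lemma sum_eigenvalues_le_sum_sortedDesc (d : Fin n → ℕ)
    (hd : (diagonal (fun i => (d i : ℝ)) - A).PosSemidef) (I : Finset (Fin n)) :
    ∑ i ∈ I, hA.eigenvalues i ≤
      ∑ i ∈ univ.filter (fun i : Fin n => (i : ℕ) < #I), (sortedDesc d i : ℝ) := by
  rw [← hA.trace_spectralProj_mul]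
  exact trace_mul_le_sum_sortedDesc d (hA.posSemidef_spectralProj I)
    (hA.spectralProj_apply_self_le_one I) (hA.trace_spectralProj I) hd

lemma neg_sum_eigenvalues_le_sum_sortedDesc (d : Fin n → ℕ)
    (hd : (diagonal (fun i => (d i : ℝ)) + A).PosSemidef) (I : Finset (Fin n)) :
    -∑ i ∈ I, hA.eigenvalues i ≤
      ∑ i ∈ univ.filter (fun i : Fin n => (i : ℕ) < #I), (sortedDesc d i : ℝ) := by
  rw [← hA.trace_spectralProj_mul, ← trace_neg, ← mul_neg]
  exact trace_mul_le_sum_sortedDesc d (hA.posSemidef_spectralProj I)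
    (hA.spectralProj_apply_self_le_one I) (hA.trace_spectralProj I) (by rwa [sub_neg_eq_add])

lemma sum_eigsDesc {M : Type*} [AddCommMonoid M] (g : ℝ → M) :
    ∑ i, g (eigsDesc A i) = ∑ i, g (hA.eigenvalues i) := by
  simp only [eigsDesc, dif_pos hA]
  exact Fintype.sum_equiv (Fin.revPerm.trans (Tuple.sort _)) _ _ fun _ => rfl

end Matrix.IsHermitian

lemma sum_abs_eq_two_mul_sum_pos {ι : Type*} [Fintype ι] {x : ι → ℝ} (hx : ∑ i, x i = 0) :
    ∑ i, |x i| = 2 * ∑ i ∈ univ.filter (fun i => 0 < x i), x i := by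
  calc ∑ i, |x i| = ∑ i, (2 * (if 0 < x i then x i else 0) - x i) :=
        sum_congr rfl fun i _ => by
          split_ifs with h
          · rw [abs_of_pos h]; ring
          · rw [abs_of_nonpos (not_lt.1 h)]; ring
    _ = _ := by rw [sum_sub_distrib, hx, sub_zero, ← mul_sum, sum_filter]

lemma sum_abs_eq_neg_two_mul_sum_neg {ι : Type*} [Fintype ι] {x : ι → ℝ} (hx : ∑ i, x i = 0) :
    ∑ i, |x i| = 2 * -∑ i ∈ univ.filter (fun i => x i < 0), x i := by
  simpa [sum_neg_distrib] using sum_abs_eq_two_mul_sum_pos (x := -x) (by simp [hx])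

namespace SimpleGraph

variable {V : Type*} [Fintype V] [DecidableEq V] (G : SimpleGraph V) [DecidableRel G.Adj]

lemma posSemidef_degMatrix_add_adjMatrix : (G.degMatrix ℝ + G.adjMatrix ℝ).PosSemidef := by
  have h : G.degMatrix ℝ + G.adjMatrix ℝ = G.incMatrix ℝ * (G.incMatrix ℝ)ᴴ := by
    rw [conjTranspose_eq_transpose_of_trivial, incMatrix_mul_transpose]
    ext i j
    by_cases hij : i = j
    · subst hij; simp [degMatrix]
    · simp [degMatrix, hij]
  rw [h]
  exact posSemidef_self_mul_conjTranspose _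

end SimpleGraph

theorem stmt_16 {n : ℕ} (G : SimpleGraph (Fin n)) [DecidableRel G.Adj] :
    ∑ i : Fin n, |eigsDesc (G.adjMatrix ℝ) i| ≤
      2 * ∑ i ∈ Finset.univ.filter (fun i : Fin n =>
          (i : ℕ) < min (posInertia (G.adjMatrix ℝ)) (negInertia (G.adjMatrix ℝ))),
        (sortedDesc (fun v => G.degree v) i : ℝ) := by
  have hA : (G.adjMatrix ℝ).IsHermitian := G.isSymm_adjMatrix
  have htr : ∑ i, hA.eigenvalues i = 0 := by
    simpa [hA.trace_eq_sum_eigenvalues] using G.trace_adjMatrix (α := ℝ)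
  have hpos := hA.sum_eigenvalues_le_sum_sortedDesc _ (G.posSemidef_lapMatrix ℝ)
    (univ.filter fun i => 0 < hA.eigenvalues i)
  have hneg := hA.neg_sum_eigenvalues_le_sum_sortedDesc _ G.posSemidef_degMatrix_add_adjMatrix
    (univ.filter fun i => hA.eigenvalues i < 0)
  rw [hA.sum_eigsDesc, posInertia, negInertia, dif_pos hA, dif_pos hA]
  rcases min_choice (#(univ.filter fun i => 0 < hA.eigenvalues i))
      (#(univ.filter fun i => hA.eigenvalues i < 0)) with h | h <;> rw [h]
  · rw [sum_abs_eq_two_mul_sum_pos htr]; linarith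
  · rw [sum_abs_eq_neg_two_mul_sum_neg htr]; linarith
end

section
/- For any simple graph G, the energy of its line graph L_G satisfies E(L_G) ≤ 4 ν^−(L_G), where ν^−(L_G) is the negative inertia of L_G. -/
open Matrix Finset

/-- The adjacency matrix of the line graph of `G`: vertices are the edges of `G`,
two of them adjacent iff they are distinct and share an endpoint. -/
def lgMat {V : Type*} [Fintype V] [DecidableEq V] (G : SimpleGraph V) [DecidableRel G.Adj] :
    Matrix G.edgeSet G.edgeSet ℝ :=
  fun e f => if e ≠ f ∧ ∃ v : V, v ∈ (e : Sym2 V) ∧ v ∈ (f : Sym2 V) then 1 else 0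

/-- The energy of a real symmetric matrix: the sum of the absolute values of its
eigenvalues (with multiplicity). -/
noncomputable def energy {m : Type*} [Fintype m] [DecidableEq m] (A : Matrix m m ℝ) : ℝ :=
  if hA : A.IsHermitian then ∑ i, |hA.eigenvalues i| else 0

/-! If `B` is the vertex-edge incidence matrix of `G`, then `BᵀB = A(L_G) + 2I`, so every
eigenvalue of `L_G` is at least `-2`. The eigenvalues also sum to `trace A(L_G) = 0`, so the
negative ones carry half of the energy, and each of them contributes at most `2` to that half. -/

open scoped ComplexOrder

theorem sum_abs_le_of_sum_eq_zero_of_neg_le {ι : Type*} [Fintype ι] {f : ι → ℝ} {c : ℝ}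
    (hsum : ∑ i, f i = 0) (hc : ∀ i, -c ≤ f i) :
    ∑ i, |f i| ≤ 2 * c * #{i | f i < 0} := by
  have habs (x : ℝ) : |x| = x + 2 * if x < 0 then -x else 0 := by
    split_ifs with hx
    · rw [abs_of_neg hx]; ring
    · rw [abs_of_nonneg (not_lt.mp hx)]; ring
  calc ∑ i, |f i| = ∑ i, f i + 2 * ∑ i with f i < 0, -f i := by
        simp only [habs, sum_add_distrib, ← mul_sum, sum_filter]
    _ ≤ 0 + 2 * ∑ i with f i < 0, c := by
        rw [hsum]; gcongr with i; linarith [hc i]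
    _ = 2 * c * #{i | f i < 0} := by rw [sum_const, nsmul_eq_mul]; ring

namespace Matrix

variable {n : Type*} [Fintype n] [DecidableEq n]

theorem IsHermitian.neg_le_eigenvalues_of_posSemidef_add_smul_one {𝕜 : Type*} [RCLike 𝕜]
    {A : Matrix n n 𝕜} (hA : A.IsHermitian) {c : ℝ} (h : (A + (c : 𝕜) • 1).PosSemidef)
    (i : n) :
    -c ≤ hA.eigenvalues i := by
  have hmem : (hA.eigenvalues i : 𝕜) + c ∈ spectrum 𝕜 (A + (c : 𝕜) • 1) := by
    rw [← Algebra.algebraMap_eq_smul_one, ← spectrum.add_singleton_eq,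
      hA.spectrum_eq_image_range]
    exact Set.add_mem_add ⟨_, ⟨i, rfl⟩, rfl⟩ rfl
  have hnonneg : (0 : 𝕜) ≤ hA.eigenvalues i + c :=
    (posSemidef_iff_isHermitian_and_spectrum_nonneg.mp h).2 hmem
  have : 0 ≤ hA.eigenvalues i + c := by exact_mod_cast hnonneg
  linarith

theorem energy_le_of_trace_eq_zero {A : Matrix n n ℝ} (htr : A.trace = 0) {c : ℝ}
    (h : (A + c • 1).PosSemidef) : energy A ≤ 2 * c * negInertia A := by
  have hA : A.IsHermitian := by
    simpa using h.isHermitian.sub (isHermitian_one.smul (IsSelfAdjoint.all c))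
  rw [energy, dif_pos hA, negInertia, dif_pos hA]
  refine sum_abs_le_of_sum_eq_zero_of_neg_le ?_
    (hA.neg_le_eigenvalues_of_posSemidef_add_smul_one h)
  simpa [hA.trace_eq_sum_eigenvalues] using htr

end Matrix

theorem Sym2.card_filter_mem_and_mem_of_ne {α : Type*} [Fintype α] [DecidableEq α]
    {z z' : Sym2 α} (h : z ≠ z') :
    #{v | v ∈ z ∧ v ∈ z'} = if ∃ v, v ∈ z ∧ v ∈ z' then 1 else 0 := by
  split_ifs with hshared
  · obtain ⟨v, hv⟩ := hshared
    rw [card_eq_one]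
    refine ⟨v, eq_singleton_iff_unique_mem.mpr ⟨by simpa using hv, fun w hw => ?_⟩⟩
    rw [mem_filter] at hw
    by_contra hwv
    exact h (Sym2.eq_of_ne_mem hwv hw.2.1 hv.1 hw.2.2 hv.2)
  · rw [card_eq_zero, filter_eq_empty_iff]
    exact fun v _ hv => hshared ⟨v, hv⟩

namespace SimpleGraph

variable {V : Type*} [Fintype V] [DecidableEq V] (G : SimpleGraph V) [DecidableRel G.Adj]

theorem incMatrix_transpose_mul_submatrix_edgeSet :
    ((G.incMatrix ℝ).submatrix id ((↑) : G.edgeSet → Sym2 V))ᵀ *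
      (G.incMatrix ℝ).submatrix id (↑) = lgMat G + (2 : ℝ) • 1 := by
  ext e f
  have hinc (v : V) (e : G.edgeSet) :
      G.incMatrix ℝ v e = if v ∈ (e : Sym2 V) then 1 else 0 := by
    simp [incMatrix_apply', incidenceSet, e.2]
  simp only [mul_apply, transpose_apply, submatrix_apply, id, hinc, ite_zero_mul_ite_zero, one_mul,
    sum_boole]
  rcases eq_or_ne e f with rfl | hef
  · have hcard : #{v | v ∈ (e : Sym2 V)} = 2 := by
      rw [← Sym2.card_toFinset_of_not_isDiag _ (G.not_isDiag_of_mem_edgeSet e.2)]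
      congr 1; ext v; simp
    simp [hcard, lgMat]
  · rw [Sym2.card_filter_mem_and_mem_of_ne (Subtype.coe_injective.ne hef)]
    simp [lgMat, hef, one_apply_ne hef]

theorem posSemidef_lgMat_add_two_smul_one : (lgMat G + (2 : ℝ) • 1).PosSemidef := by
  rw [← incMatrix_transpose_mul_submatrix_edgeSet]
  exact posSemidef_conjTranspose_mul_self _

theorem trace_lgMat : (lgMat G).trace = 0 :=
  sum_eq_zero fun e _ => by simp [lgMat]

end SimpleGraph

theorem stmt_17 {V : Type*} [Fintype V] [DecidableEq V]
    (G : SimpleGraph V) [DecidableRel G.Adj] :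
    energy (lgMat G) ≤ 4 * (negInertia (lgMat G) : ℝ) :=
  calc energy (lgMat G) ≤ 2 * 2 * negInertia (lgMat G) :=
        energy_le_of_trace_eq_zero G.trace_lgMat G.posSemidef_lgMat_add_two_smul_one
    _ = 4 * negInertia (lgMat G) := by norm_num
end

section
/- Let s ≥ 3 and let G = K_s □ K_2 be the Cartesian product of the complete graph on s vertices with the complete graph on 2 vertices. Then q(G) = 2; moreover, there exists a matrix A ∈ S(G) with exactly two distinct eigenvalues that has the Strong Spectral Property. -/
/-!
The lower bound `q(G) ≥ 2` holds for every graph with an edge: a real symmetric matrix with a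
single eigenvalue `r` is `r • 1`, so it has no nonzero off-diagonal entry.

For the upper bound take, with `s = |ι|` and `c = √(s + 1)`, the block matrix
`A = [[J, c I], [c I, s I - J]]` on `ι × Fin 2`, where `J` is the all-ones matrix.
Since `J² = s J`, one checks `A² = s A + (s + 1) I`, i.e. `(A - (s + 1))(A + 1) = 0`, so `A` has
exactly the two eigenvalues `s + 1` and `-1`. Its zero entries are the non-edges of `K_s □ K_2`,
and for SSP a symmetric `X` vanishing on the support of `A` is `[[0, Y], [Yᵀ, 0]]` with
`diag Y = 0`; commuting with `A` forces `Y = Yᵀ` and `s Y_ij = r_i + r_j` for the row sums `r`,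
whence `r = 0` and `Y = 0`.
-/

open Matrix Finset

/-- `S(G)`: real symmetric matrices whose off-diagonal zero/nonzero pattern is given by `G`. -/
def SMat {V : Type*} [Fintype V] (G : SimpleGraph V) : Set (Matrix V V ℝ) :=
  {A | A.IsSymm ∧ ∀ i j, i ≠ j → (A i j ≠ 0 ↔ G.Adj i j)}

/-- The Strong Spectral Property of a real symmetric matrix. -/
def HasSSP {V : Type*} [Fintype V] [DecidableEq V] (A : Matrix V V ℝ) : Prop :=
  ∀ X : Matrix V V ℝ, X.IsSymm → Matrix.hadamard A X = 0 →
    Matrix.hadamard (1 : Matrix V V ℝ) X = 0 → A * X - X * A = 0 → X = 0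

/-- `q(G)`: the minimum number of distinct eigenvalues over matrices in `S(G)`. -/
noncomputable def qNum {V : Type*} [Fintype V] [DecidableEq V] (G : SimpleGraph V) : ℕ :=
  sInf {m | ∃ A ∈ SMat G, (spectrum ℝ A).ncard = m}

section Spectrum

variable {𝕜 R : Type*} [Field 𝕜] [Ring R] [Algebra 𝕜 R]

theorem spectrum.mem_of_mul_eq_zero {A B : R} {a : 𝕜} (h : (A - algebraMap 𝕜 R a) * B = 0)
    (hB : B ≠ 0) : a ∈ spectrum 𝕜 A := by
  rw [spectrum.mem_iff]
  intro hu
  rw [← neg_sub, neg_mul, neg_eq_zero] at h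
  exact hB (hu.mul_right_eq_zero.mp h)

open Polynomial in
theorem spectrum.eq_pair_of_mul_sub_algebraMap_eq_zero {A : R} {a b : 𝕜}
    (h : (A - algebraMap 𝕜 R a) * (A - algebraMap 𝕜 R b) = 0)
    (ha : A ≠ algebraMap 𝕜 R a) (hb : A ≠ algebraMap 𝕜 R b) :
    spectrum 𝕜 A = {a, b} := by
  have : Nontrivial R := ⟨⟨A, algebraMap 𝕜 R a, ha⟩⟩
  apply subset_antisymm
  · intro x hx
    have hp := spectrum.subset_polynomial_aeval A ((X - C a) * (X - C b)) ⟨x, hx, rfl⟩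
    simpa only [map_mul, map_sub, aeval_X, aeval_C, h, spectrum.zero_eq, eval_mul, eval_sub,
      eval_X, eval_C, Set.mem_singleton_iff, mul_eq_zero, sub_eq_zero, Set.mem_insert_iff] using hp
  · have h' : (A - algebraMap 𝕜 R b) * (A - algebraMap 𝕜 R a) = 0 := by
      rw [← h]
      simp only [sub_mul, mul_sub, Algebra.commutes, ← map_mul, mul_comm a b]
      abel
    rintro x (rfl | rfl)
    · exact spectrum.mem_of_mul_eq_zero h (sub_ne_zero.mpr hb)
    · exact spectrum.mem_of_mul_eq_zero h' (sub_ne_zero.mpr ha)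

end Spectrum

namespace Matrix

variable {n : Type*} [Fintype n]

theorem eq_zero_of_sum_row_add_sum_row_eq_mul {Y : Matrix n n ℝ} {c : ℝ} (hc : c ≠ 0)
    (hdiag : ∀ i, Y i i = 0) (h : ∀ i j, ∑ m, Y i m + ∑ m, Y j m = c * Y i j) : Y = 0 := by
  have hrow (i : n) : ∑ m, Y i m = 0 := by
    have := h i i
    rw [hdiag, mul_zero] at this
    linarith
  ext i j
  simpa [hrow, hc] using (h i j).symm

variable [DecidableEq n]

theorem ne_algebraMap_of_apply_ne_zero {R : Type*} [CommSemiring R] {A : Matrix n n R}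
    {i j : n} (hij : i ≠ j) (hA : A i j ≠ 0) (r : R) : A ≠ algebraMap R (Matrix n n R) r := by
  rintro rfl
  exact hA (by simp [algebraMap_matrix_apply, hij])

theorem IsHermitian.two_le_ncard_spectrum {A : Matrix n n ℝ} (hA : A.IsHermitian)
    {i j : n} (hij : i ≠ j) (hAij : A i j ≠ 0) : 2 ≤ (spectrum ℝ A).ncard := by
  by_contra! h
  obtain ⟨r, hr⟩ := (Set.ncard_le_one_iff_subset_singleton).mp (Nat.le_of_lt_succ h)
  exact ne_algebraMap_of_apply_ne_zero hij hAij r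
    (CFC.eq_algebraMap_of_spectrum_subset_singleton A r hr hA)

end Matrix

section Graph

variable {V : Type*} [Fintype V] [DecidableEq V] {G : SimpleGraph V} {u v : V}

theorem two_le_ncard_spectrum_of_mem_SMat (huv : G.Adj u v) {A : Matrix V V ℝ}
    (hA : A ∈ SMat G) : 2 ≤ (spectrum ℝ A).ncard :=
  (isHermitian_iff_isSymm.mpr hA.1).two_le_ncard_spectrum huv.ne ((hA.2 u v huv.ne).mpr huv)

theorem qNum_eq_two_of_mem_SMat (huv : G.Adj u v) {A : Matrix V V ℝ} (hA : A ∈ SMat G)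
    (hA2 : (spectrum ℝ A).ncard = 2) : qNum G = 2 :=
  le_antisymm (Nat.sInf_le ⟨A, hA, hA2⟩) <|
    le_csInf ⟨2, A, hA, hA2⟩ fun _ ⟨_, hB, hm⟩ =>
      hm ▸ two_le_ncard_spectrum_of_mem_SMat huv hB

end Graph

section TwoEigenvalueMatrix

variable (ι : Type*) [Fintype ι] [DecidableEq ι]

noncomputable def twoEigenvalueMatrix : Matrix (ι × Fin 2) (ι × Fin 2) ℝ :=
  Matrix.of fun (i, k) (j, l) =>
    ![![1, √(Fintype.card ι + 1) * (1 : Matrix ι ι ℝ) i j],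
      ![√(Fintype.card ι + 1) * (1 : Matrix ι ι ℝ) i j,
        Fintype.card ι * (1 : Matrix ι ι ℝ) i j - 1]] k l

variable {ι}

@[simp] theorem twoEigenvalueMatrix_apply_zero_zero (i j : ι) :
    twoEigenvalueMatrix ι (i, 0) (j, 0) = 1 := rfl

@[simp] theorem twoEigenvalueMatrix_apply_zero_one (i j : ι) :
    twoEigenvalueMatrix ι (i, 0) (j, 1) = if i = j then √(Fintype.card ι + 1) else 0 := by
  simp [twoEigenvalueMatrix, one_apply]

@[simp] theorem twoEigenvalueMatrix_apply_one_zero (i j : ι) :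
    twoEigenvalueMatrix ι (i, 1) (j, 0) = if i = j then √(Fintype.card ι + 1) else 0 := by
  simp [twoEigenvalueMatrix, one_apply]

@[simp] theorem twoEigenvalueMatrix_apply_one_one (i j : ι) :
    twoEigenvalueMatrix ι (i, 1) (j, 1) = Fintype.card ι * (1 : Matrix ι ι ℝ) i j - 1 := rfl

theorem twoEigenvalueMatrix_isSymm : (twoEigenvalueMatrix ι).IsSymm := by
  ext ⟨i, k⟩ ⟨j, l⟩
  fin_cases k <;> fin_cases l <;> simp [twoEigenvalueMatrix, one_apply, eq_comm]

theorem twoEigenvalueMatrix_apply_ne_zero_iff (hι : 1 < Fintype.card ι) (p q : ι × Fin 2) :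
    twoEigenvalueMatrix ι p q ≠ 0 ↔ p.1 = q.1 ∨ p.2 = q.2 := by
  obtain ⟨i, k⟩ := p
  obtain ⟨j, l⟩ := q
  have hc : √((Fintype.card ι : ℝ) + 1) ≠ 0 := by positivity
  have hs : (Fintype.card ι : ℝ) - 1 ≠ 0 := by
    rw [sub_ne_zero]
    exact_mod_cast hι.ne'
  fin_cases k <;> fin_cases l <;> by_cases h : i = j <;>
    simp [twoEigenvalueMatrix, one_apply, h, hs, hc]

theorem twoEigenvalueMatrix_mem_SMat (hι : 1 < Fintype.card ι) :
    twoEigenvalueMatrix ι ∈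
      SMat ((⊤ : SimpleGraph ι).boxProd (⊤ : SimpleGraph (Fin 2))) := by
  refine ⟨twoEigenvalueMatrix_isSymm, fun p q hpq => ?_⟩
  rw [twoEigenvalueMatrix_apply_ne_zero_iff hι, SimpleGraph.boxProd_adj, SimpleGraph.top_adj,
    SimpleGraph.top_adj]
  have := Prod.ext_iff.not.mp hpq
  tauto

theorem twoEigenvalueMatrix_mul_self :
    twoEigenvalueMatrix ι * twoEigenvalueMatrix ι =
      (Fintype.card ι : ℝ) • twoEigenvalueMatrix ι + ((Fintype.card ι : ℝ) + 1) • 1 := by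
  have hc :
      √((Fintype.card ι : ℝ) + 1) * √((Fintype.card ι : ℝ) + 1) = Fintype.card ι + 1 :=
    Real.mul_self_sqrt (by positivity)
  ext ⟨i, k⟩ ⟨j, l⟩
  rw [mul_apply, Fintype.sum_prod_type]
  fin_cases k <;> fin_cases l <;>
    simp [twoEigenvalueMatrix, Fin.sum_univ_two, one_apply, sum_add_distrib, sum_sub_distrib,
      mul_sub, sub_mul, mul_ite, ite_mul, hc] <;>
    split_ifs <;> ring

theorem twoEigenvalueMatrix_ne_algebraMap (hι : 1 < Fintype.card ι) (r : ℝ) :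
    twoEigenvalueMatrix ι ≠ algebraMap ℝ _ r := by
  obtain ⟨i⟩ : Nonempty ι := Fintype.card_pos_iff.mp (by omega)
  exact ne_algebraMap_of_apply_ne_zero (i := (i, 0)) (j := (i, 1)) (by simp)
    ((twoEigenvalueMatrix_apply_ne_zero_iff hι _ _).mpr (Or.inl rfl)) r

theorem spectrum_twoEigenvalueMatrix (hι : 1 < Fintype.card ι) :
    spectrum ℝ (twoEigenvalueMatrix ι) = {(Fintype.card ι : ℝ) + 1, -1} := by
  refine spectrum.eq_pair_of_mul_sub_algebraMap_eq_zero ?_ (twoEigenvalueMatrix_ne_algebraMap hι _)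
    (twoEigenvalueMatrix_ne_algebraMap hι _)
  simp only [Algebra.algebraMap_eq_smul_one, sub_mul, mul_sub, smul_mul_assoc, mul_smul_comm,
    one_mul, mul_one, twoEigenvalueMatrix_mul_self]
  module

theorem ncard_spectrum_twoEigenvalueMatrix (hι : 1 < Fintype.card ι) :
    (spectrum ℝ (twoEigenvalueMatrix ι)).ncard = 2 := by
  rw [spectrum_twoEigenvalueMatrix hι, Set.ncard_pair]
  have : (0 : ℝ) ≤ Fintype.card ι := Nat.cast_nonneg _
  intro h
  linarith

theorem twoEigenvalueMatrix_hasSSP (hι : 1 < Fintype.card ι) :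
    HasSSP (twoEigenvalueMatrix ι) := by
  intro X hXs hAX _ hcomm
  have hsupp (p q : ι × Fin 2) (h : p.1 = q.1 ∨ p.2 = q.2) : X p q = 0 :=
    (mul_eq_zero.mp (congrFun (congrFun hAX p) q)).resolve_left
      ((twoEigenvalueMatrix_apply_ne_zero_iff hι p q).mpr h)
  have hX00 (i j : ι) : X (i, 0) (j, 0) = 0 := hsupp _ _ (Or.inr rfl)
  have hX11 (i j : ι) : X (i, 1) (j, 1) = 0 := hsupp _ _ (Or.inr rfl)
  have hcomm_apply (p q) : (twoEigenvalueMatrix ι * X) p q = (X * twoEigenvalueMatrix ι) p q :=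
    congrFun (congrFun (sub_eq_zero.mp hcomm) p) q
  have hX10 (i j : ι) : X (i, 1) (j, 0) = X (i, 0) (j, 1) := by
    have := hcomm_apply (i, 0) (j, 0)
    simp only [mul_apply, Fintype.sum_prod_type, Fin.sum_univ_two,
      twoEigenvalueMatrix_apply_zero_zero, twoEigenvalueMatrix_apply_zero_one,
      twoEigenvalueMatrix_apply_one_zero, hX00, ite_mul, mul_ite, zero_mul, mul_zero, zero_add,
      sum_ite_eq, sum_ite_eq', mem_univ, if_true] at this
    exact mul_left_cancel₀ (by positivity) (this.trans (mul_comm _ _))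
  have hrow (i j : ι) :
      ∑ m, X (i, 0) (m, 1) + ∑ m, X (j, 0) (m, 1) = Fintype.card ι * X (i, 0) (j, 1) := by
    have := hcomm_apply (i, 0) (j, 1)
    simp only [mul_apply, Fintype.sum_prod_type, Fin.sum_univ_two,
      twoEigenvalueMatrix_apply_zero_zero, twoEigenvalueMatrix_apply_zero_one,
      twoEigenvalueMatrix_apply_one_one, hX00, hX11, one_apply, mul_ite, zero_mul,
      mul_zero, zero_add, add_zero, sum_ite_eq', mem_univ, if_true, mul_one, mul_sub,
      sum_sub_distrib, one_mul, ite_self] at this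
    have hcol : ∑ m, X (m, 0) (j, 1) = ∑ m, X (j, 0) (m, 1) :=
      Finset.sum_congr rfl fun m _ => (hXs.apply (j, 1) (m, 0)).trans (hX10 j m)
    linarith
  have hY := eq_zero_of_sum_row_add_sum_row_eq_mul (Y := Matrix.of fun i j => X (i, 0) (j, 1))
    (Nat.cast_ne_zero.mpr (by omega)) (fun i => hsupp _ _ (Or.inl rfl)) hrow
  have hX01 (i j : ι) : X (i, 0) (j, 1) = 0 := congrFun (congrFun hY i) j
  ext ⟨i, k⟩ ⟨j, l⟩
  fin_cases k <;> fin_cases l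
  · exact hX00 i j
  · exact hX01 i j
  · exact (hX10 i j).trans (hX01 i j)
  · exact hX11 i j

end TwoEigenvalueMatrix

theorem stmt_18 (s : ℕ) (hs : 3 ≤ s) :
    qNum ((⊤ : SimpleGraph (Fin s)).boxProd (⊤ : SimpleGraph (Fin 2))) = 2 ∧
    ∃ A ∈ SMat ((⊤ : SimpleGraph (Fin s)).boxProd (⊤ : SimpleGraph (Fin 2))),
      (spectrum ℝ A).ncard = 2 ∧ HasSSP A := by
  have hs' : 1 < Fintype.card (Fin s) := by rw [Fintype.card_fin]; omega
  have hedge : ((⊤ : SimpleGraph (Fin s)).boxProd (⊤ : SimpleGraph (Fin 2))).Adj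
      (⟨0, by omega⟩, 0) (⟨0, by omega⟩, 1) :=
    SimpleGraph.boxProd_adj.mpr (Or.inr ⟨by simp, rfl⟩)
  have hmem := twoEigenvalueMatrix_mem_SMat hs'
  have hcard := ncard_spectrum_twoEigenvalueMatrix hs'
  exact ⟨qNum_eq_two_of_mem_SMat hedge hmem hcard, _, hmem, hcard,
    twoEigenvalueMatrix_hasSSP hs'⟩
end
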